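/- For n > 0 one has L_n(x,qs,q) = F_{n+1}(x,s,q) + q^n·s·F_{n-1}(x,s,q). -/

import Mathlib

/-!
Compare the two sides term by term in powers of `s`. Writing `N = n - k`, the `k`-th coefficient
of `L_n(x, qs, q)` carries the factor `[N + k] / [N] · qbinom(N, k)`. Splitting
`[N + k] = [N] + q^N [k]` and using the absorption identity `[k] · qbinom(N, k) = [N] · qbinom(N - 1, k - 1)`
turns it into `qbinom(N, k) + q^N qbinom(N - 1, k - 1)`, which are the `k`-th coefficients of
`F_{n+1}(x, s, q)` and of `q^n s F_{n-1}(x, s, q)` respectively.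
-/

open Finset

noncomputable section

abbrev K : Type := RatFunc ℚ

def q : K := RatFunc.X

def qint (a : K) (m : ℕ) : K := ∑ i ∈ range m, a ^ i

def qfact (a : K) (m : ℕ) : K := ∏ i ∈ range m, qint a (i + 1)

def qbinom (a : K) (n k : ℕ) : K :=
  if k ≤ n then qfact a n / (qfact a k * qfact a (n - k)) else 0

/-- q-Fibonacci polynomials F_n(x,s,q) with base `a`. -/
def qF (a x s : K) : ℕ → K
  | 0 => 0
  | n + 1 => ∑ k ∈ range (n / 2 + 1),
      a ^ (k * (k + 1) / 2) * qbinom a (n - k) k * s ^ k * x ^ (n - 2 * k)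

/-- q-Lucas polynomials L_n(x,s,q) with base `a` (L_0 = 2). -/
def qL (a x s : K) (n : ℕ) : K :=
  if n = 0 then 2 else
  ∑ k ∈ range (n / 2 + 1),
    a ^ (k * (k - 1) / 2) * (qint a n / qint a (n - k)) * qbinom a (n - k) k
      * s ^ k * x ^ (n - 2 * k)

/-- Starred variant: L*_0 = 1, L*_n = L_n for n > 0. -/
def qLs (a x s : K) (n : ℕ) : K := if n = 0 then 1 else qL a x s n

/-- Rogers-Szegő polynomial. -/
def rs (a x y : K) (m : ℕ) : K := ∑ j ∈ range (m + 1), qbinom a m j * x ^ j * y ^ (m - j)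

/-- q-Pochhammer (q;q)_m. -/
def qpoch (a : K) (m : ℕ) : K := ∏ j ∈ range m, (1 - a ^ (j + 1))

lemma qint_add (a : K) (m n : ℕ) : qint a (m + n) = qint a m + a ^ m * qint a n := by
  simp only [qint, sum_range_add, mul_sum, pow_add]

lemma qfact_succ (a : K) (m : ℕ) : qfact a (m + 1) = qfact a m * qint a (m + 1) :=
  prod_range_succ _ _

lemma qint_q_ne_zero {m : ℕ} (hm : 0 < m) : qint q m ≠ 0 := by
  have hpoly : qint q m = algebraMap (Polynomial ℚ) K (∑ i ∈ range m, Polynomial.X ^ i) := by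
    simp [qint, q, RatFunc.algebraMap_X]
  rw [hpoly]
  refine RatFunc.algebraMap_ne_zero fun hzero => ?_
  -- the polynomial `1 + X + ⋯ + X^(m-1)` takes the value `m` at `1`
  have h := congrArg (Polynomial.eval 1) hzero
  simp only [Polynomial.eval_finsetSum, Polynomial.eval_pow, Polynomial.eval_X, one_pow,
    sum_const, card_range, nsmul_eq_mul, mul_one, Polynomial.eval_zero, Nat.cast_eq_zero] at h
  omega

lemma qfact_q_ne_zero (m : ℕ) : qfact q m ≠ 0 :=
  prod_ne_zero_iff.2 fun i _ => qint_q_ne_zero i.succ_pos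

lemma qint_mul_qbinom_succ (N k : ℕ) :
    qint q (k + 1) * qbinom q (N + 1) (k + 1) = qint q (N + 1) * qbinom q N k := by
  by_cases hk : k ≤ N
  · have hk1 := qint_q_ne_zero k.succ_pos
    have hk0 := qfact_q_ne_zero k
    have hNk := qfact_q_ne_zero (N - k)
    rw [qbinom, qbinom, if_pos (by omega), if_pos hk, Nat.add_sub_add_right, qfact_succ,
      qfact_succ]
    field_simp
  · rw [qbinom, qbinom, if_neg (by omega), if_neg hk, mul_zero, mul_zero]

lemma qint_add_div_mul_qbinom (N k : ℕ) :
    qint q (N + 1 + (k + 1)) / qint q (N + 1) * qbinom q (N + 1) (k + 1)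
      = qbinom q (N + 1) (k + 1) + q ^ (N + 1) * qbinom q N k := by
  have hN := qint_q_ne_zero N.succ_pos
  rw [qint_add, ← mul_div_cancel_left₀ (qbinom q N k) hN, ← qint_mul_qbinom_succ]
  field_simp

-- The `(j + 1)`-th summands of `qL`, `qF`, `qF` written exactly as `sum_range_succ'` exposes them.
lemma qL_q_mul_term_succ (x s : K) {m j : ℕ} (hj : 2 * j ≤ m) :
    q ^ ((j + 1) * (j + 1 - 1) / 2) * (qint q (m + 2) / qint q (m + 2 - (j + 1)))
        * qbinom q (m + 2 - (j + 1)) (j + 1) * (q * s) ^ (j + 1) * x ^ (m + 2 - 2 * (j + 1))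
      = q ^ ((j + 1) * (j + 1 + 1) / 2) * qbinom q (m + 2 - (j + 1)) (j + 1) * s ^ (j + 1)
          * x ^ (m + 2 - 2 * (j + 1))
        + q ^ (m + 2) * s * (q ^ (j * (j + 1) / 2) * qbinom q (m - j) j * s ^ j
          * x ^ (m - 2 * j)) := by
  obtain ⟨r, rfl⟩ : ∃ r, m = 2 * j + r := ⟨m - 2 * j, by omega⟩
  have hexp : (j + 1) * (j + 1 + 1) / 2 = (j + 1) * j / 2 + (j + 1) := by
    rw [show (j + 1) * (j + 1 + 1) = (j + 1) * j + (j + 1) * 2 by ring,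
      Nat.add_mul_div_right _ _ two_pos]
  rw [show 2 * j + r + 2 - (j + 1) = j + r + 1 by omega,
    show 2 * j + r + 2 - 2 * (j + 1) = r by omega, show 2 * j + r - j = j + r by omega,
    show 2 * j + r - 2 * j = r by omega, Nat.add_sub_cancel, hexp, mul_comm j (j + 1),
    show 2 * j + r + 2 = j + r + 1 + (j + 1) by omega]
  linear_combination (q ^ ((j + 1) * j / 2) * (q * s) ^ (j + 1) * x ^ r)
    * qint_add_div_mul_qbinom (j + r) j

theorem stmt4 (x s : K) (n : ℕ) (hn : 0 < n) :
    qL q x (q * s) n = qF q x s (n + 1) + q ^ n * s * qF q x s (n - 1) := by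
  obtain _ | _ | m := n
  · omega
  · norm_num [qL, qF, qbinom, qfact, qint]
  · have hlead : qint q (m + 2) / qint q (m + 2 - 0) = 1 := div_self (qint_q_ne_zero (by omega))
    have hterms := sum_congr rfl fun j (hj : j ∈ range (m / 2 + 1)) =>
      qL_q_mul_term_succ x s (m := m) (j := j) (by rw [mem_range] at hj; omega)
    rw [qL, if_neg (by omega), Nat.add_sub_cancel, qF, qF, show m + 1 + 1 = m + 2 from rfl,
      show (m + 2) / 2 + 1 = m / 2 + 1 + 1 by omega, sum_range_succ' _ (m / 2 + 1),
      sum_range_succ' _ (m / 2 + 1), hterms, sum_add_distrib, ← mul_sum, hlead]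
    ring
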